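/- arXiv:1810.05040 — 3 statements merged into one kernel-verified Lean document; each statement's English description precedes it below -/
import Mathlib

section
/- Let m > k ≥ 0 be integers and ε_m, ε_k, ε_{-k}, ε_{-m} ∈ {1, −1}. If (t − 1)² divides ε_m t^m + ε_k t^k + ε_{-k} t^{-k} + ε_{-m} t^{-m} in ℤ[t,t⁻¹], then this Laurent polynomial equals ±(t^m − t^k − t^{-k} + t^{-m}); that is, ε_m = ε_{-m} and ε_k = ε_{-k} = −ε_m. -/
/-!
Evaluating a Laurent polynomial at `t = 1 + ε` in the dual numbers records `p(1)` and `p'(1)`, and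
`(t - 1)²` maps to `ε² = 0`. So divisibility gives `ε_m + ε_k + ε_{-k} + ε_{-m} = 0` and
`m (ε_m - ε_{-m}) + k (ε_k - ε_{-k}) = 0`. As `|k (ε_k - ε_{-k})| ≤ 2k < 2m`, the second forces
`ε_m = ε_{-m}`, and then the first forces `ε_k = ε_{-k} = -ε_m`.
-/

open LaurentPolynomial DualNumber

namespace LaurentPolynomial

variable {R : Type*} [CommRing R]

noncomputable def oneAddEpsZPow : Multiplicative ℤ →* DualNumber R where
  toFun n := 1 + n.toAdd • ε
  map_one' := by simp
  map_mul' a b := by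
    ext <;> simp [add_smul, add_comm]

/-- Evaluation at `1 + ε`: its value at `p` is `p(1) + p'(1) ε`. -/
noncomputable def evalOneAddEps : R[T;T⁻¹] →ₐ[R] DualNumber R :=
  AddMonoidAlgebra.lift R (DualNumber R) ℤ oneAddEpsZPow

theorem evalOneAddEps_C_mul_T (r : R) (n : ℤ) :
    evalOneAddEps (C r * T n) = r • (1 + n • ε) := by
  rw [← single_eq_C_mul_T, evalOneAddEps, AddMonoidAlgebra.lift_single]
  rfl

theorem evalOneAddEps_T (n : ℤ) : evalOneAddEps (T n : R[T;T⁻¹]) = 1 + n • ε := by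
  simpa using evalOneAddEps_C_mul_T (1 : R) n

theorem evalOneAddEps_eq_zero_of_dvd {p : R[T;T⁻¹]} (h : (T 1 - 1) ^ 2 ∣ p) :
    evalOneAddEps p = 0 := by
  obtain ⟨q, rfl⟩ := h
  rw [map_mul, map_pow, map_sub, map_one, evalOneAddEps_T, one_smul, add_sub_cancel_left, sq,
    eps_mul_eps, zero_mul]

end LaurentPolynomial

theorem signs_eq_of_sum_eq_zero_of_moment_eq_zero {m k a b c d : ℤ} (hk : 0 ≤ k) (hmk : k < m)
    (ha : a = 1 ∨ a = -1) (hb : b = 1 ∨ b = -1) (hc : c = 1 ∨ c = -1) (hd : d = 1 ∨ d = -1)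
    (hsum : a + b + c + d = 0) (hmoment : a * m + b * k + c * -k + d * -m = 0) :
    d = a ∧ b = -a ∧ c = -a := by
  rcases ha with rfl | rfl <;> rcases hb with rfl | rfl <;> rcases hc with rfl | rfl <;>
    rcases hd with rfl | rfl <;> omega

theorem signs_of_divisible_quadrinomial (m k : ℤ) (hk : 0 ≤ k) (hmk : k < m)
    (εm εk εk' εm' : ℤ)
    (hεm : εm = 1 ∨ εm = -1) (hεk : εk = 1 ∨ εk = -1)
    (hεk' : εk' = 1 ∨ εk' = -1) (hεm' : εm' = 1 ∨ εm' = -1)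
    (hdvd : ((T 1 - 1) ^ 2 : LaurentPolynomial ℤ) ∣
      (C εm * T m + C εk * T k + C εk' * T (-k) + C εm' * T (-m))) :
    εm' = εm ∧ εk = -εm ∧ εk' = -εm := by
  have h := evalOneAddEps_eq_zero_of_dvd hdvd
  simp only [map_add, evalOneAddEps_C_mul_T] at h
  have hsum : εm + εk + εk' + εm' = 0 := by simpa using congrArg TrivSqZeroExt.fst h
  have hmoment : εm * m + εk * k + εk' * -k + εm' * -m = 0 := by
    simpa [mul_comm] using congrArg TrivSqZeroExt.snd h
  exact signs_eq_of_sum_eq_zero_of_moment_eq_zero hk hmk hεm hεk hεk' hεm' hsum hmoment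
end

section
/- Let Δ ∈ ℤ[t,t⁻¹] be a Laurent polynomial whose value at t = 1 is nonzero. Then the Laurent polynomial (t − 2 + t⁻¹)·Δ has at least three nonzero coefficients (its support contains at least three exponents). -/
/-!
Evaluating at the dual number `1 + ε` records both the value and the derivative at `1`:
`p(1 + ε) = ∑ aₙ + (∑ n aₙ) ε`, and `p ↦ p(1 + ε)` is a ring homomorphism. Since
`t - 2 + t⁻¹ = t⁻¹ (t - 1)²` vanishes at `1 + ε`, so does `p = (t - 2 + t⁻¹) Δ`, i.e.
`∑ aₙ = ∑ n aₙ = 0`. No nonzero coefficient family supported on at most two exponents satisfies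
both equations, while `p ≠ 0` because `Δ ≠ 0`.
-/

open LaurentPolynomial

/-- Evaluation of a Laurent polynomial at a unit `x` of the base ring:
`∑ e, (coefficient of `t^e`) * x^e`. -/
def LaurentPolynomial.evalUnit {R : Type*} [CommRing R] (x : Rˣ)
    (p : LaurentPolynomial R) : R :=
  p.coeff.sum fun e a => a * ((x ^ e : Rˣ) : R)

open DualNumber

namespace DualNumber
variable (R : Type*) [CommRing R]

def oneAddEpsUnit : R[ε]ˣ where
  val := 1 + ε
  inv := 1 - ε
  val_inv := by linear_combination -(eps_mul_eps (R := R))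
  inv_val := by linear_combination -(eps_mul_eps (R := R))

variable {R}

theorem val_oneAddEpsUnit : ((oneAddEpsUnit R : R[ε]ˣ) : R[ε]) = 1 + ε := rfl

theorem val_inv_oneAddEpsUnit : (((oneAddEpsUnit R)⁻¹ : R[ε]ˣ) : R[ε]) = 1 - ε := rfl

theorem val_oneAddEpsUnit_zpow (n : ℤ) : ((oneAddEpsUnit R ^ n : R[ε]ˣ) : R[ε]) = 1 + n • ε := by
  induction n using Int.induction_on with
  | zero => simp
  | succ n ih =>
    rw [zpow_add_one, Units.val_mul, ih, val_oneAddEpsUnit]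
    simp only [zsmul_eq_mul]
    push_cast
    linear_combination (n : R[ε]) * eps_mul_eps (R := R)
  | pred n ih =>
    rw [zpow_sub_one, Units.val_mul, ih, val_inv_oneAddEpsUnit]
    simp only [zsmul_eq_mul]
    push_cast
    linear_combination (n : R[ε]) * eps_mul_eps (R := R)

end DualNumber

theorem Finsupp.three_le_card_support_of_sum_eq_zero_of_sum_zsmul_eq_zero {M : Type*}
    [AddCommGroup M] [IsAddTorsionFree M] {a : ℤ →₀ M} (ha : a ≠ 0)
    (hsum : (a.sum fun _ x => x) = 0) (hmom : (a.sum fun n x => n • x) = 0) :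
    3 ≤ a.support.card := by
  by_contra! hcard
  interval_cases hc : a.support.card
  · exact ha (Finsupp.support_eq_empty.mp (Finset.card_eq_zero.mp hc))
  · obtain ⟨e, he⟩ := Finset.card_eq_one.mp hc
    rw [Finsupp.sum, he, Finset.sum_singleton] at hsum
    exact Finsupp.mem_support_iff.mp (he ▸ Finset.mem_singleton_self e) hsum
  · obtain ⟨e₁, e₂, hne, he⟩ := Finset.card_eq_two.mp hc
    rw [Finsupp.sum, he, Finset.sum_pair hne] at hsum hmom
    rw [← neg_eq_of_add_eq_zero_right hsum, smul_neg, ← sub_eq_add_neg, ← sub_smul,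
      IsAddTorsionFree.zsmul_eq_zero_iff_right (sub_ne_zero.mpr hne)] at hmom
    exact Finsupp.mem_support_iff.mp (he ▸ Finset.mem_insert_self e₁ {e₂}) hmom

namespace LaurentPolynomial

theorem eval₂_eq_sum {R S : Type*} [CommSemiring R] [CommSemiring S] (f : R →+* S) (x : Sˣ)
    (p : R[T;T⁻¹]) : eval₂ f x p = p.coeff.sum fun n r => f r * ↑(x ^ n) := by
  induction p using LaurentPolynomial.induction_on' with
  | add p q hp hq =>
    rw [map_add, hp, hq, AddMonoidAlgebra.coeff_add, Finsupp.sum_add_index']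
    · simp
    · simp [add_mul]
  | C_mul_T n r =>
    rw [eval₂_C_mul_T, ← single_eq_C_mul_T, AddMonoidAlgebra.coeff_single,
      Finsupp.sum_single_index]
    simp

variable {R : Type*} [CommRing R]

theorem fst_eval₂_oneAddEpsUnit (p : R[T;T⁻¹]) :
    (eval₂ (algebraMap R R[ε]) (oneAddEpsUnit R) p).fst = p.coeff.sum fun _ a => a := by
  simp [eval₂_eq_sum, Finsupp.sum, TrivSqZeroExt.fst_sum, TrivSqZeroExt.algebraMap_eq_inl,
    val_oneAddEpsUnit_zpow]

theorem snd_eval₂_oneAddEpsUnit (p : R[T;T⁻¹]) :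
    (eval₂ (algebraMap R R[ε]) (oneAddEpsUnit R) p).snd = p.coeff.sum fun n a => n • a := by
  simp [eval₂_eq_sum, Finsupp.sum, TrivSqZeroExt.snd_sum, TrivSqZeroExt.algebraMap_eq_inl,
    val_oneAddEpsUnit_zpow, mul_comm]

theorem three_le_card_support_of_eval₂_oneAddEpsUnit_eq_zero [IsAddTorsionFree R]
    {p : R[T;T⁻¹]} (hp : p ≠ 0) (h : eval₂ (algebraMap R R[ε]) (oneAddEpsUnit R) p = 0) :
    3 ≤ p.coeff.support.card :=
  Finsupp.three_le_card_support_of_sum_eq_zero_of_sum_zsmul_eq_zero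
    (fun h0 => hp (AddMonoidAlgebra.coeff_eq_zero.mp h0))
    (by rw [← fst_eval₂_oneAddEpsUnit, h, TrivSqZeroExt.fst_zero])
    (by rw [← snd_eval₂_oneAddEpsUnit, h, TrivSqZeroExt.snd_zero])

theorem eval₂_oneAddEpsUnit_T_sub_two_add_T_neg_one :
    eval₂ (algebraMap R R[ε]) (oneAddEpsUnit R) (T 1 - 2 + T (-1)) = 0 := by
  rw [map_add, map_sub, map_ofNat, eval₂_T, eval₂_T, zpow_one, zpow_neg_one, val_oneAddEpsUnit,
    val_inv_oneAddEpsUnit]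
  ring

theorem T_sub_two_add_T_neg_one_ne_zero [Nontrivial R] : (T 1 - 2 + T (-1) : R[T;T⁻¹]) ≠ 0 := by
  intro h
  simpa using congrArg (fun p : R[T;T⁻¹] => p.coeff 1) h

end LaurentPolynomial

theorem three_le_support_card (Δ : LaurentPolynomial ℤ)
    (h : Δ.evalUnit 1 ≠ 0) :
    3 ≤ ((T 1 - 2 + T (-1)) * Δ : LaurentPolynomial ℤ).coeff.support.card := by
  have hΔ : Δ ≠ 0 := by
    rintro rfl
    exact h Finsupp.sum_zero_index
  refine three_le_card_support_of_eval₂_oneAddEpsUnit_eq_zero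
    (mul_ne_zero T_sub_two_add_T_neg_one_ne_zero hΔ) ?_
  rw [map_mul, eval₂_oneAddEpsUnit_T_sub_two_add_T_neg_one, zero_mul]
end

section
/- Let m > k ≥ 0 be natural numbers and ε_m, ε_k, ε_{-k}, ε_{-m} ∈ {1, −1}, and suppose there exists Δ ∈ ℤ[t,t⁻¹] with ε_m t^m + ε_k t^k + ε_{-k} t^{-k} + ε_{-m} t^{-m} = (t − 2 + t⁻¹)·Δ and with the value of Δ at t = 1 equal to 1 or −1. Then m = 1 and k = 0. -/
/-!
Weight the coefficients of a Laurent polynomial by `e` and by `e ^ 2` (the first two derivatives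
of `p(exp s)` at `s = 0`). Multiplication by `t - 2 + t⁻¹` acts on weights as the second
difference, which kills `e` and turns `e ^ 2` into the constant `2`. Applied to the factorisation
this gives `(εm - εm') m + (εk - εk') k = 0` and `(εm + εm') m² + (εk + εk') k² = 2 Δ(1)`,
which is `±2`, and a short sign analysis leaves only `m = 1`, `k = 0`.
-/

open LaurentPolynomial

namespace LaurentPolynomial

variable {R : Type*} [CommRing R]

noncomputable def weightedCoeffSum (w : ℤ → R) : R[T;T⁻¹] →ₗ[R] R :=
  Finsupp.linearCombination R w ∘ₗ (AddMonoidAlgebra.coeffLinearEquiv R).toLinearMap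

theorem weightedCoeffSum_C_mul_T (w : ℤ → R) (a : R) (n : ℤ) :
    weightedCoeffSum w (C a * T n) = a * w n := by
  rw [← single_eq_C_mul_T]
  simp [weightedCoeffSum, -single_eq_C_mul_T]

theorem weightedCoeffSum_const (c : R) (p : R[T;T⁻¹]) :
    weightedCoeffSum (fun _ => c) p = c * p.evalUnit 1 := by
  simp [weightedCoeffSum, evalUnit, Finsupp.linearCombination_apply, Finsupp.mul_sum, mul_comm]

theorem weightedCoeffSum_T_one_sub_two_add_T_neg_one_mul (w : ℤ → R) (p : R[T;T⁻¹]) :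
    weightedCoeffSum w ((T 1 - 2 + T (-1)) * p) =
      weightedCoeffSum (fun e => w (e + 1) - 2 * w e + w (e - 1)) p := by
  induction p using LaurentPolynomial.induction_on' with
  | add p q hp hq => rw [mul_add, map_add, map_add, hp, hq]
  | C_mul_T n a =>
    have : (T 1 - 2 + T (-1)) * (C a * T n) =
        C a * T (n + 1) - C (2 * a) * T n + C a * T (n - 1) := by
      rw [T_add, T_sub, map_mul, map_ofNat]; ring
    rw [this, map_add, map_sub]
    simp only [weightedCoeffSum_C_mul_T]
    ring

theorem weightedCoeffSum_T_one_sub_two_add_T_neg_one_mul_eq_zero (p : R[T;T⁻¹]) :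
    weightedCoeffSum (fun e => (e : R)) ((T 1 - 2 + T (-1)) * p) = 0 := by
  rw [weightedCoeffSum_T_one_sub_two_add_T_neg_one_mul, ← zero_mul (p.evalUnit 1),
    ← weightedCoeffSum_const]
  congr 2 with e
  push_cast; ring

theorem weightedCoeffSum_sq_T_one_sub_two_add_T_neg_one_mul (p : R[T;T⁻¹]) :
    weightedCoeffSum (fun e => (e : R) ^ 2) ((T 1 - 2 + T (-1)) * p) = 2 * p.evalUnit 1 := by
  rw [weightedCoeffSum_T_one_sub_two_add_T_neg_one_mul, ← weightedCoeffSum_const]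
  congr 2 with e
  push_cast; ring

end LaurentPolynomial

theorem eq_one_and_eq_zero_of_signed_moments {m k : ℕ} (hkm : k < m) {εm εk εk' εm' c : ℤ}
    (hεm : εm = 1 ∨ εm = -1) (hεk : εk = 1 ∨ εk = -1)
    (hεk' : εk' = 1 ∨ εk' = -1) (hεm' : εm' = 1 ∨ εm' = -1) (hc : c = 1 ∨ c = -1)
    (h₁ : (εm - εm') * m + (εk - εk') * k = 0)
    (h₂ : (εm + εm') * m ^ 2 + (εk + εk') * k ^ 2 = 2 * c) :
    m = 1 ∧ k = 0 := by
  -- otherwise `|(εm - εm') * m| = 2 * m` exceeds `|(εk - εk') * k| ≤ 2 * k`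
  obtain rfl : εm' = εm := by
    rcases hεm with rfl | rfl <;> rcases hεm' with rfl | rfl <;> rcases hεk with rfl | rfl <;>
      rcases hεk' with rfl | rfl <;> omega
  rcases Nat.eq_zero_or_pos k with rfl | hk
  · push_cast at h₂
    have hm : (m : ℤ) ^ 2 = 1 := by
      rcases hεm with rfl | rfl <;> rcases hc with rfl | rfl <;> linarith [sq_nonneg (m : ℤ)]
    exact ⟨by simpa [Nat.pow_eq_one] using (by exact_mod_cast hm : m ^ 2 = 1), rfl⟩
  · obtain rfl : εk' = εk := by
      have : (εk - εk') * k = 0 := by linear_combination h₁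
      rcases mul_eq_zero.1 this with h | h <;> omega
    have hsq : (k : ℤ) ^ 2 + 3 ≤ m ^ 2 := by nlinarith
    rcases hεm with rfl | rfl <;> rcases hεk with rfl | rfl <;> rcases hc with rfl | rfl <;>
      linarith [sq_nonneg (k : ℤ)]

theorem m_eq_one_and_k_eq_zero (m k : ℕ) (hmk : k < m)
    (εm εk εk' εm' : ℤ)
    (hεm : εm = 1 ∨ εm = -1) (hεk : εk = 1 ∨ εk = -1)
    (hεk' : εk' = 1 ∨ εk' = -1) (hεm' : εm' = 1 ∨ εm' = -1)
    (hΔ : ∃ Δ : LaurentPolynomial ℤ,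
      (C εm * T (m : ℤ) + C εk * T (k : ℤ) + C εk' * T (-(k : ℤ)) + C εm' * T (-(m : ℤ))
        = (T 1 - 2 + T (-1)) * Δ) ∧ (Δ.evalUnit 1 = 1 ∨ Δ.evalUnit 1 = -1)) :
    m = 1 ∧ k = 0 := by
  obtain ⟨Δ, hfactor, hval⟩ := hΔ
  have h₁ := weightedCoeffSum_T_one_sub_two_add_T_neg_one_mul_eq_zero Δ
  have h₂ := weightedCoeffSum_sq_T_one_sub_two_add_T_neg_one_mul Δ
  rw [← hfactor] at h₁ h₂
  simp only [map_add, weightedCoeffSum_C_mul_T, Int.cast_id] at h₁ h₂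
  exact eq_one_and_eq_zero_of_signed_moments hmk hεm hεk hεk' hεm' hval
    (by linear_combination h₁) (by linear_combination h₂)
end
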